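/- Let μ = ω₂^∨ = (1/2, 1/2), J = S̃ ∖ {s₁} = {s₀, s₂}, σ = id, τ := τ₂. Then: (i) EO^J_{σ,cox}(μ) = {τ, s₁τ}; (ii) EO^J(μ) ∖ EO^J_{σ,cox}(μ) = {s₁s₂τ, s₁s₀τ, s₁s₂s₀τ}; (iii) all three elements of the complement are σ-straight; (iv) their Newton points are ν̄_{s₁s₂τ} = ν̄_{s₁s₀τ} = (1/2, 0) and ν̄_{s₁s₂s₀τ} = (1/2, 1/2). (Note that s₁s₂τ and s₁s₀τ each have supp_σ equal to all of S̃, since conjugation by τ₂ interchanges s₀ and s₂, so neither lies in EO^J_{σ,cox}(μ).) -/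

import Mathlib

/- Extended affine Weyl group of type C̃₂ with X = {λ ∈ (1/2)ℤ² : λ₁-λ₂ ∈ ℤ}, realized
   inside the permutation group of ℚ²: t^λ·u acts by x ↦ λ + u(x), u a signed permutation. -/

open Classical
noncomputable section

abbrev V2 := Fin 2 → ℚ
abbrev Wt2 := Equiv.Perm V2

/-- translation t^λ -/
def transl (lam : V2) : Wt2 := Equiv.addLeft lam
/-- coordinate permutation -/
def permV (u : Equiv.Perm (Fin 2)) : Wt2 := u.arrowCongr (Equiv.refl ℚ)
/-- sign change in coordinate j -/
def negAt (j : Fin 2) : Wt2 :=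
  Function.Involutive.toPerm (fun v => fun i => if i = j then -(v i) else v i)
    (by intro v; funext i; by_cases h : i = j <;> simp [h])
/-- standard basis vector -/
def eV (i : Fin 2) : V2 := Pi.single i 1
/-- standard inner product -/
def dotp (v w : V2) : ℚ := ∑ i, v i * w i
/-- the linear part of an affine transformation -/
def linp (w : Wt2) : V2 → V2 := fun x => w x - w 0

/-- s₁ : the transposition of the two coordinates -/
def s1 : Wt2 := permV (Equiv.swap 0 1)
/-- s₂ : the sign change in coordinate 2 -/
def s2 : Wt2 := negAt 1
/-- s₀ = t^{e₁}·(sign change in coordinate 1) -/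
def s0 : Wt2 := transl (eV 0) * negAt 0
/-- r : e₁ ↦ -e₂, e₂ ↦ -e₁ -/
def rC : Wt2 := negAt 0 * (negAt 1 * permV (Equiv.swap 0 1))
/-- the length-zero element τ₂ = t^{(1/2,1/2)}·r -/
def tau2 : Wt2 := transl (fun _ => 1/2) * rC

/-- the set S̃ of simple reflections of W_a -/
def St : Set Wt2 := {s0, s1, s2}
/-- Ω = {1, τ₂} -/
def Om : Set Wt2 := {1, tau2}

/-- the positive roots e₁-e₂, e₁+e₂, 2e₁, 2e₂ -/
def PhiC2 : Set V2 := {eV 0 - eV 1, eV 0 + eV 1, eV 0 + eV 0, eV 1 + eV 1}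

/-- the contribution of a positive root α to the length of w = t^λ·u -/
def lterm (w : Wt2) (α : V2) : ℚ :=
  if linp w⁻¹ α ∈ PhiC2 then |dotp (w 0) α| else |dotp (w 0) α - 1|

/-- the length function on W̃ -/
def ell (w : Wt2) : ℚ :=
  lterm w (eV 0 - eV 1) + lterm w (eV 0 + eV 1) + lterm w (eV 0 + eV 0) + lterm w (eV 1 + eV 1)

/-- `l` is a reduced word for `w` in the Coxeter system (W_a, S̃) -/
def IsRed (w : Wt2) (l : List Wt2) : Prop :=
  (∀ s ∈ l, s ∈ St) ∧ l.prod = w ∧ (l.length : ℚ) = ell w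

/-- Bruhat order on W_a, via the subword property -/
def bleWa (u u' : Wt2) : Prop :=
  ∃ l l' : List Wt2, IsRed u' l ∧ l'.Sublist l ∧ l'.prod = u

/-- Bruhat order on W̃ = W_a ⊔ W_a·τ₂ -/
def ble (w w' : Wt2) : Prop :=
  ∃ u u' om, om ∈ Om ∧ w = u * om ∧ w' = u' * om ∧ bleWa u u'

/-- the finite Weyl group W₀ = {±1}² ⋊ S₂, generated by s₁, s₂ -/
def W0 : Subgroup Wt2 := Subgroup.closure {s1, s2}

/-- the admissible set Adm(μ) -/
def Adm (μ : V2) : Set Wt2 := {w | ∃ x ∈ W0, ble w (transl ((x : Wt2) μ))}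

/-- the standard parabolic subgroup W_J -/
def WJ (J : Set Wt2) : Subgroup Wt2 := Subgroup.closure J

/-- ^JW̃ : elements of minimal length in their coset W_J·w -/
def minJ (J : Set Wt2) : Set Wt2 := {w | ∀ x ∈ WJ J, ell w ≤ ell (x * w)}

/-- the Ekedahl-Oort elements EO^J(μ) = (W_J·Adm(μ)·W_J) ∩ ^JW̃ -/
def EO (J : Set Wt2) (μ : V2) : Set Wt2 :=
  {w | (∃ x ∈ WJ J, ∃ y ∈ WJ J, ∃ a ∈ Adm μ, w = x * a * y) ∧ w ∈ minJ J}

/-- δ_w = Ad(ω) ∘ σ -/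
def deltaW (sig : MulAut Wt2) (om : Wt2) : MulAut Wt2 := MulAut.conj om * sig

/-- supp_σ(w) for w = u·ω -/
def suppsig (sig : MulAut Wt2) (w : Wt2) : Set Wt2 :=
  {s | ∃ u om l, om ∈ Om ∧ w = u * om ∧ IsRed u l ∧
        ∃ s0 ∈ l, ∃ m : ℤ, s = ((deltaW sig om) ^ m) s0}

/-- the number of orbits of an automorphism δ on a set A -/
def orbCount (δ : MulAut Wt2) (A : Set Wt2) : ℕ :=
  {O : Set Wt2 | ∃ s ∈ A, O = {t | ∃ m : ℤ, (δ ^ m) s = t}}.ncard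

/-- w = u·ω is a σ-Coxeter element of W_{supp_σ(w)} -/
def IsCox (sig : MulAut Wt2) (w : Wt2) : Prop :=
  ∃ u om, om ∈ Om ∧ w = u * om ∧
    ell u = (orbCount (deltaW sig om) (suppsig sig w) : ℚ)

/-- EO^J_{σ,cox}(μ) -/
def EOcox (sig : MulAut Wt2) (J : Set Wt2) (μ : V2) : Set Wt2 :=
  {w | w ∈ EO J μ ∧ suppsig sig w ≠ St ∧ IsCox sig w}

/-- w·σ(w)·σ²(w)⋯σ^{m-1}(w) -/
def sigmaProd (sig : MulAut Wt2) (w : Wt2) (m : ℕ) : Wt2 :=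
  (((List.range m).map fun k => (sig ^ k) w)).prod

/-- w is σ-straight -/
def IsStraight (sig : MulAut Wt2) (w : Wt2) : Prop :=
  ∀ m : ℕ, 1 ≤ m → ell (sigmaProd sig w m) = m * ell w

/-- ν is the Newton point of w -/
def IsNewton (sig : MulAut Wt2) (w : Wt2) (ν : V2) : Prop :=
  ∃ (m : ℕ) (lam : V2), 1 ≤ m ∧ sig ^ m = 1 ∧ sigmaProd sig w m = transl lam ∧
    (∃ x ∈ W0, ν = (x : Wt2) (fun j => lam j / (m : ℚ))) ∧
    ν 1 ≤ ν 0 ∧ 0 ≤ ν 1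

/-
Every element of W̃ acts on ℚ² as x ↦ b/2 + A x with b ∈ ℤ² and A a signed permutation matrix,
and the length formula depends only on the integer data (b, A); this turns each claim into a
finite computation, carried out by `decide`.

Adm(μ) lies in W_a τ₂, because W_a maps 0 into ℤ² while t^{xμ} maps it to (±1/2, ±1/2). Its
maximal elements t^{xμ} τ₂ have length 3, so their reduced words are among the 27 words of
length 3, and Adm(μ) consists of the elements u τ₂ with u a subword of one of them. Forming
W_J Adm(μ) W_J and keeping the J-minimal elements gives EO^J(μ); the σ-supports follow
because Ad(τ₂) swaps s₀ and s₂.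

Each of s₁s₂τ, s₁s₀τ, s₁s₂s₀τ has a translation t^λ as its square, and every root term of the
element has the sign of ⟨λ, α⟩, so lengths add along the powers: this gives straightness,
and λ/2 gives the Newton point.
-/

open scoped Matrix

namespace C2Tilde

lemma mem_closure_pair_of_involutions {G : Type*} [Group G] {s t : G} (hs : s * s = 1)
    (ht : t * t = 1) (hst : s * t = t * s) {x : G} (hx : x ∈ Subgroup.closure {s, t}) :
    x = 1 ∨ x = s ∨ x = t ∨ x = s * t := by
  have step : ∀ a ∈ ({s, t} : Set G), ∀ y : G, (y = 1 ∨ y = s ∨ y = t ∨ y = s * t) →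
      a * y = 1 ∨ a * y = s ∨ a * y = t ∨ a * y = s * t := by
    rintro a (rfl | rfl) y (rfl | rfl | rfl | rfl)
    · exact Or.inr (Or.inl (mul_one a))
    · exact Or.inl hs
    · exact Or.inr (Or.inr (Or.inr rfl))
    · exact Or.inr (Or.inr (Or.inl (by rw [← mul_assoc, hs, one_mul])))
    · exact Or.inr (Or.inr (Or.inl (mul_one a)))
    · exact Or.inr (Or.inr (Or.inr hst.symm))
    · exact Or.inl ht
    · exact Or.inr (Or.inl (by rw [hst, ← mul_assoc, ht, one_mul]))
  induction hx using Subgroup.closure_induction_left with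
  | one => exact Or.inl rfl
  | mul_left a ha y _ ih => exact step a ha y ih
  | inv_mul_cancel a ha y _ ih =>
    have ha' : a⁻¹ = a := by
      rcases ha with rfl | rfl
      exacts [inv_eq_of_mul_eq_one_right hs, inv_eq_of_mul_eq_one_right ht]
    rw [ha']
    exact step a ha y ih

lemma mapsTo_of_mem_closure_of_involutive {α : Type*} {T : Set (Equiv.Perm α)} {A : Set α}
    (hT : ∀ t ∈ T, t⁻¹ = t ∧ Set.MapsTo t A A) {g : Equiv.Perm α}
    (hg : g ∈ Subgroup.closure T) : Set.MapsTo g A A := by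
  induction hg using Subgroup.closure_induction'' with
  | mem t ht => exact (hT t ht).2
  | inv_mem t ht => exact (hT t ht).1 ▸ (hT t ht).2
  | one => exact Set.mapsTo_id A
  | mul a b _ _ ha hb => exact ha.comp hb

lemma zpow_eq_one_or_self {G : Type*} [Group G] {a : G} (ha : a * a = 1) (m : ℤ) :
    a ^ m = 1 ∨ a ^ m = a := by
  have ha2 : a ^ (2 : ℤ) = 1 := by rw [zpow_two, ha]
  obtain ⟨k, rfl | rfl⟩ := Int.even_or_odd' m
  · left
    rw [zpow_mul, ha2, one_zpow]
  · right
    rw [zpow_add_one, zpow_mul, ha2, one_zpow, one_mul]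

/-! ## Half-integral affine maps -/

def halfVec (v : Fin 2 → ℤ) : V2 := fun i => (v i : ℚ) / 2

/-- The data `(b, A)` of the affine map `x ↦ b/2 + A x` of `ℚ²`. -/
@[ext]
structure HalfAff where
  trans : Fin 2 → ℤ
  lin : Matrix (Fin 2) (Fin 2) ℤ

namespace HalfAff

instance : DecidableEq HalfAff := fun g h =>
  decidable_of_iff (g.trans = h.trans ∧ g.lin = h.lin) HalfAff.ext_iff.symm

instance : Mul HalfAff := ⟨fun g h => ⟨g.trans + g.lin *ᵥ h.trans, g.lin * h.lin⟩⟩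

instance : One HalfAff := ⟨⟨0, 1⟩⟩

@[simp] lemma mul_trans (g h : HalfAff) : (g * h).trans = g.trans + g.lin *ᵥ h.trans := rfl
@[simp] lemma mul_lin (g h : HalfAff) : (g * h).lin = g.lin * h.lin := rfl
@[simp] lemma one_trans : (1 : HalfAff).trans = 0 := rfl
@[simp] lemma one_lin : (1 : HalfAff).lin = 1 := rfl

instance : Monoid HalfAff where
  mul_assoc g h k := by
    ext1 <;> simp only [mul_trans, mul_lin, Matrix.mulVec_add, Matrix.mulVec_mulVec, add_assoc,
      Matrix.mul_assoc]
  one_mul g := by ext1 <;> simp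
  mul_one g := by ext1 <;> simp

def act (g : HalfAff) (x : V2) : V2 := halfVec g.trans + g.lin.map (Int.cast : ℤ → ℚ) *ᵥ x

lemma act_apply (g : HalfAff) (x : V2) (i : Fin 2) :
    g.act x i = (g.trans i : ℚ) / 2 + ∑ j, (g.lin i j : ℚ) * x j := by
  simp only [act, halfVec, Pi.add_apply, Matrix.mulVec, dotProduct, Matrix.map_apply]

lemma act_mul (g h : HalfAff) (x : V2) : (g * h).act x = g.act (h.act x) := by
  funext i
  simp only [act_apply, mul_trans, mul_lin, Pi.add_apply, Matrix.mulVec, dotProduct,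
    Matrix.mul_apply, Fin.sum_univ_two]
  push_cast
  ring

lemma act_one (x : V2) : (1 : HalfAff).act x = x := by
  funext i
  fin_cases i <;> simp [act_apply, Matrix.one_apply]

lemma act_sub_act_zero (g : HalfAff) (x : V2) :
    g.act x - g.act 0 = g.lin.map (Int.cast : ℤ → ℚ) *ᵥ x := by
  simp [act]

lemma act_zero (g : HalfAff) : g.act 0 = halfVec g.trans := by
  simp [act]

lemma act_injective : Function.Injective act := by
  intro g h hgh
  have htrans : g.trans = h.trans := by
    funext i
    have := congrFun (congrFun hgh 0) i
    simp only [act_zero, halfVec] at this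
    exact_mod_cast (div_left_inj' two_ne_zero).mp this
  have hlin : g.lin.map (Int.cast : ℤ → ℚ) = h.lin.map Int.cast := by
    refine Matrix.ext_iff_mulVec.mpr fun x => ?_
    rw [← act_sub_act_zero, ← act_sub_act_zero, hgh]
  exact HalfAff.ext htrans (Matrix.map_injective Int.cast_injective hlin)

def translation (v : Fin 2 → ℤ) : HalfAff := ⟨v, 1⟩

lemma translation_mul (v : Fin 2 → ℤ) (g : HalfAff) :
    translation v * g = ⟨v + g.trans, g.lin⟩ := by
  ext1 <;> simp [translation]

lemma translation_pow (v : Fin 2 → ℤ) (n : ℕ) : translation v ^ n = translation (n • v) := by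
  induction n with
  | zero => ext1 <;> simp [translation]
  | succ n ih =>
    rw [pow_succ', ih, translation_mul, translation, translation, succ_nsmul']

lemma act_halfVec (g : HalfAff) (v : Fin 2 → ℤ) :
    g.act (halfVec v) = halfVec (g * translation v).trans := by
  funext i
  simp only [act_apply, halfVec, translation, mul_trans, Pi.add_apply, Matrix.mulVec, dotProduct,
    Fin.sum_univ_two]
  push_cast
  ring

def posRoots : List (Fin 2 → ℤ) := [![1, -1], ![1, 1], ![2, 0], ![0, 2]]

/-- `2 ⟨λ, α⟩ - 2 [u⁻¹α ∉ Φ⁺]` for `g` modelling `t^λ u`: its absolute value is twice the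
contribution of `α` to the length. -/
def rootTerm (g : HalfAff) (α : Fin 2 → ℤ) : ℤ :=
  g.trans ⬝ᵥ α - if ∃ β ∈ posRoots, g.lin *ᵥ β = α then 0 else 2

def doubleLength (g : HalfAff) : ℤ := (posRoots.map fun α => |g.rootTerm α|).sum

lemma rootTerm_translation_mul (v : Fin 2 → ℤ) (g : HalfAff) (α : Fin 2 → ℤ) :
    (translation v * g).rootTerm α = v ⬝ᵥ α + g.rootTerm α := by
  rw [translation_mul]
  simp only [rootTerm, add_dotProduct]
  ring

lemma rootTerm_translation (v : Fin 2 → ℤ) {α : Fin 2 → ℤ} (hα : α ∈ posRoots) :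
    (translation v).rootTerm α = v ⬝ᵥ α := by
  rw [rootTerm, if_pos ⟨α, hα, Matrix.one_mulVec α⟩, sub_zero]
  rfl

lemma doubleLength_translation (v : Fin 2 → ℤ) :
    (translation v).doubleLength = (posRoots.map fun α => |v ⬝ᵥ α|).sum :=
  congrArg List.sum (List.map_congr_left fun α hα => by rw [rootTerm_translation v hα])

lemma doubleLength_translation_nsmul (n : ℕ) (v : Fin 2 → ℤ) :
    (translation (n • v)).doubleLength = n * (translation v).doubleLength := by
  rw [doubleLength_translation, doubleLength_translation, ← List.sum_map_mul_left]
  refine congrArg List.sum (List.map_congr_left fun α _ => ?_)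
  rw [smul_dotProduct, abs_nsmul, nsmul_eq_mul]

lemma doubleLength_translation_mul {v : Fin 2 → ℤ} {g : HalfAff}
    (hsign : ∀ α ∈ posRoots, 0 ≤ v ⬝ᵥ α * g.rootTerm α) :
    (translation v * g).doubleLength = (translation v).doubleLength + g.doubleLength := by
  rw [doubleLength_translation, doubleLength, doubleLength, ← List.sum_map_add]
  refine congrArg List.sum (List.map_congr_left fun α hα => ?_)
  rw [rootTerm_translation_mul, abs_add_eq_add_abs_iff]
  exact mul_nonneg_iff.mp (hsign α hα)

lemma doubleLength_pow {g : HalfAff} {v : Fin 2 → ℤ} (hsq : g * g = translation v)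
    (hsign : ∀ α ∈ posRoots, 0 ≤ v ⬝ᵥ α * g.rootTerm α)
    (hlen : (translation v).doubleLength = 2 * g.doubleLength) (m : ℕ) :
    (g ^ m).doubleLength = m * g.doubleLength := by
  have hpow : ∀ q : ℕ, g ^ (2 * q) = translation (q • v) := fun q => by
    rw [pow_mul, sq, hsq, translation_pow]
  obtain ⟨q, rfl | rfl⟩ := Nat.even_or_odd' m
  · rw [hpow, doubleLength_translation_nsmul, hlen]
    push_cast
    ring
  · have hsign' : ∀ α ∈ posRoots, 0 ≤ (q • v) ⬝ᵥ α * g.rootTerm α := fun α hα => by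
      rw [smul_dotProduct, nsmul_eq_mul, mul_assoc]
      exact mul_nonneg (Nat.cast_nonneg q) (hsign α hα)
    rw [pow_succ, hpow, doubleLength_translation_mul hsign', doubleLength_translation_nsmul, hlen]
    push_cast
    ring

end HalfAff

open HalfAff

lemma PhiC2_roots : eV 0 - eV 1 = Int.cast ∘ ![1, -1] ∧ eV 0 + eV 1 = Int.cast ∘ ![1, 1] ∧
    eV 0 + eV 0 = Int.cast ∘ ![2, 0] ∧ eV 1 + eV 1 = Int.cast ∘ ![0, 2] := by
  refine ⟨?_, ?_, ?_, ?_⟩ <;> funext i <;> fin_cases i <;> norm_num [eV]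

lemma mem_PhiC2_iff (v : V2) : v ∈ PhiC2 ↔ ∃ β ∈ posRoots, Int.cast ∘ β = v := by
  obtain ⟨h₁, h₂, h₃, h₄⟩ := PhiC2_roots
  simp only [PhiC2, h₁, h₂, h₃, h₄, posRoots, Set.mem_insert_iff, Set.mem_singleton_iff,
    List.mem_cons, List.not_mem_nil, or_false, exists_eq_or_imp, exists_eq_left, eq_comm]

def Represents (w : Wt2) (g : HalfAff) : Prop := ⇑w = g.act

namespace Represents

variable {w w' : Wt2} {g g' : HalfAff}

lemma apply (h : Represents w g) (x : V2) : w x = g.act x := congrFun h x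

lemma mul (h : Represents w g) (h' : Represents w' g') : Represents (w * w') (g * g') := by
  funext x
  rw [Equiv.Perm.mul_apply, h.apply, h'.apply, act_mul]

lemma one : Represents 1 1 := funext fun x => (act_one x).symm

lemma pow (h : Represents w g) (n : ℕ) : Represents (w ^ n) (g ^ n) := by
  induction n with
  | zero => exact one
  | succ n ih => exact ih.mul h

lemma of_eq (h : Represents w g) (hg : g = g') : Represents w g' := hg ▸ h

lemma eq (h : Represents w g) (h' : Represents w' g') (hg : g = g') : w = w' :=
  Equiv.coe_fn_injective (h.trans (hg ▸ h'.symm))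

lemma unique (h : Represents w g) (h' : Represents w g') : g = g' :=
  act_injective (h.symm.trans h')

lemma ne (h : Represents w g) (h' : Represents w' g') (hg : g ≠ g') : w ≠ w' :=
  fun hw => hg (h.unique (hw ▸ h'))

lemma inv_eq_self (h : Represents w g) (hg : g * g = 1) : w⁻¹ = w :=
  inv_eq_of_mul_eq_one_right ((h.mul h).eq one hg)

lemma linp_inv_mem_PhiC2_iff (h : Represents w g) (α : V2) :
    linp w⁻¹ α ∈ PhiC2 ↔ ∃ β ∈ PhiC2, g.lin.map (Int.cast : ℤ → ℚ) *ᵥ β = α := by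
  set A := g.lin.map (Int.cast : ℤ → ℚ)
  have hA : ∀ x, A *ᵥ x = w x - w 0 := fun x => by rw [h.apply, h.apply, act_sub_act_zero]
  have hlinp : A *ᵥ linp w⁻¹ α = α := by
    rw [linp, Matrix.mulVec_sub, hA, hA]
    simp only [Equiv.Perm.coe_inv, Equiv.apply_symm_apply, sub_sub_sub_cancel_right, sub_zero]
  have hinj : ∀ x y, A *ᵥ x = A *ᵥ y → x = y := fun x y hxy => by
    rw [hA, hA, sub_left_inj] at hxy
    exact w.injective hxy
  refine ⟨fun hα => ⟨_, hα, hlinp⟩, ?_⟩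
  rintro ⟨β, hβ, hAβ⟩
  rwa [hinj _ _ (hlinp.trans hAβ.symm)]

lemma lterm_eq (h : Represents w g) (α : Fin 2 → ℤ) :
    lterm w (Int.cast ∘ α) = |g.rootTerm α| / 2 := by
  have hcast : ∀ β : Fin 2 → ℤ, g.lin.map (Int.cast : ℤ → ℚ) *ᵥ (Int.cast ∘ β) =
      Int.cast ∘ (g.lin *ᵥ β) := fun β =>
    funext fun i => (RingHom.map_mulVec (Int.castRingHom ℚ) _ _ i).symm
  have hcond : linp w⁻¹ (Int.cast ∘ α) ∈ PhiC2 ↔ ∃ β ∈ posRoots, g.lin *ᵥ β = α := by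
    simp only [h.linp_inv_mem_PhiC2_iff, mem_PhiC2_iff]
    constructor
    · rintro ⟨_, ⟨β, hβ, rfl⟩, hβα⟩
      exact ⟨β, hβ, Function.Injective.comp_left Int.cast_injective ((hcast β).symm.trans hβα)⟩
    · rintro ⟨β, hβ, hβα⟩
      exact ⟨_, ⟨β, hβ, rfl⟩, by rw [hcast, hβα]⟩
  have hdot : dotp (w 0) (Int.cast ∘ α) = (g.trans ⬝ᵥ α : ℤ) / 2 := by
    simp only [h.apply, act_zero, dotp, halfVec, dotProduct, Function.comp_apply]
    push_cast
    rw [Finset.sum_div]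
    exact Finset.sum_congr rfl fun i _ => by ring
  rw [lterm, if_congr hcond rfl rfl, hdot, rootTerm]
  split_ifs
  · simp [abs_div]
  · rw [show ((g.trans ⬝ᵥ α : ℤ) : ℚ) / 2 - 1 = ((g.trans ⬝ᵥ α - 2 : ℤ) : ℚ) / 2 by push_cast; ring]
    simp [abs_div]

lemma ell_eq (h : Represents w g) : ell w = g.doubleLength / 2 := by
  obtain ⟨h₁, h₂, h₃, h₄⟩ := PhiC2_roots
  rw [ell, h₁, h₂, h₃, h₄, h.lterm_eq, h.lterm_eq, h.lterm_eq, h.lterm_eq]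
  simp only [doubleLength, posRoots, List.map_cons, List.map_nil, List.sum_cons, List.sum_nil]
  push_cast
  ring

end Represents

def S0 : HalfAff := ⟨![2, 0], !![-1, 0; 0, 1]⟩
def S1 : HalfAff := ⟨0, !![0, 1; 1, 0]⟩
def S2 : HalfAff := ⟨0, !![1, 0; 0, -1]⟩
def Tau : HalfAff := ⟨![1, 1], !![0, -1; -1, 0]⟩

lemma represents_transl (v : Fin 2 → ℤ) : Represents (transl (halfVec v)) (translation v) := by
  funext x i
  simp [transl, translation, act_apply, Matrix.one_apply, halfVec]

lemma represents_negAt_zero : Represents (negAt 0) ⟨0, !![-1, 0; 0, 1]⟩ := by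
  funext x i
  fin_cases i <;> simp [negAt, Function.Involutive.toPerm, act_apply, Fin.sum_univ_two]

lemma represents_s1 : Represents s1 S1 := by
  funext x i
  fin_cases i <;> simp [s1, permV, S1, act_apply, Fin.sum_univ_two]

lemma represents_s2 : Represents s2 S2 := by
  funext x i
  fin_cases i <;> simp [s2, negAt, Function.Involutive.toPerm, S2, act_apply, Fin.sum_univ_two]

lemma represents_s0 : Represents s0 S0 := by
  have he : eV 0 = halfVec ![2, 0] := by
    funext i
    fin_cases i <;> norm_num [eV, Pi.single_apply, halfVec]
  have h := (represents_transl ![2, 0]).mul represents_negAt_zero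
  rw [← he] at h
  exact h.of_eq (by decide)

lemma half_eq_halfVec : (fun _ => 1 / 2 : V2) = halfVec ![1, 1] := by
  funext i
  fin_cases i <;> norm_num [halfVec]

lemma represents_tau2 : Represents tau2 Tau := by
  have h := (represents_transl ![1, 1]).mul
    (represents_negAt_zero.mul (represents_s2.mul represents_s1))
  rw [← half_eq_halfVec] at h
  exact h.of_eq (by decide)

/-! ## The admissible set -/

def genW : Fin 3 → Wt2 := ![s0, s1, s2]
def gen : Fin 3 → HalfAff := ![S0, S1, S2]
def wordModel (c : List (Fin 3)) : HalfAff := (c.map gen).prod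

lemma represents_genW (i : Fin 3) : Represents (genW i) (gen i) := by
  fin_cases i
  exacts [represents_s0, represents_s1, represents_s2]

lemma represents_word (c : List (Fin 3)) : Represents (c.map genW).prod (wordModel c) := by
  induction c with
  | nil => exact Represents.one
  | cons i c ih => exact (represents_genW i).mul ih

lemma genW_mem_St (i : Fin 3) : genW i ∈ St := by
  fin_cases i <;> simp [genW, St]

lemma exists_word {l : List Wt2} (hl : ∀ s ∈ l, s ∈ St) : ∃ c : List (Fin 3), c.map genW = l := by
  have hrange : ∀ s ∈ St, s ∈ Set.range genW := by
    rintro s (rfl | rfl | rfl)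
    exacts [⟨0, rfl⟩, ⟨1, rfl⟩, ⟨2, rfl⟩]
  show l ∈ Set.range (List.map genW)
  rw [Set.range_list_map]
  exact fun s hs => hrange s (hl s hs)

lemma isRed_word (c : List (Fin 3)) (h : (wordModel c).doubleLength = 2 * c.length) :
    IsRed (c.map genW).prod (c.map genW) := by
  refine ⟨fun s hs => ?_, rfl, ?_⟩
  · obtain ⟨i, -, rfl⟩ := List.mem_map.mp hs
    exact genW_mem_St i
  · rw [(represents_word c).ell_eq, h, List.length_map]
    push_cast
    ring

def evenTrans : Submonoid HalfAff where
  carrier := {g | ∀ i, Even (g.trans i)}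
  mul_mem' {g h} hg hh i := by
    simp only [mul_trans, Pi.add_apply, Matrix.mulVec, dotProduct]
    exact (hg i).add (Finset.even_sum _ fun j _ => (hh j).mul_left _)
  one_mem' _ := Even.zero

lemma wordModel_mem_evenTrans (c : List (Fin 3)) : wordModel c ∈ evenTrans := by
  refine Submonoid.list_prod_mem _ fun g hg => ?_
  have hgen : ∀ i j, Even ((gen i).trans j) := by decide
  obtain ⟨i, -, rfl⟩ := List.mem_map.mp hg
  exact hgen i

/-- Products of simple reflections have even translation part. -/
lemma list_prod_ne_of_odd {w : Wt2} {g : HalfAff} (hw : Represents w g)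
    (hodd : ¬ Even (g.trans 0)) {l : List Wt2} (hl : ∀ s ∈ l, s ∈ St) : l.prod ≠ w := by
  rintro rfl
  obtain ⟨c, rfl⟩ := exists_word hl
  exact hodd ((represents_word c).unique hw ▸ wordModel_mem_evenTrans c 0)

lemma s0_mul_s0 : s0 * s0 = 1 := (represents_s0.mul represents_s0).eq .one (by decide)
lemma s2_mul_s2 : s2 * s2 = 1 := (represents_s2.mul represents_s2).eq .one (by decide)
lemma s0_mul_s2 : s0 * s2 = s2 * s0 :=
  (represents_s0.mul represents_s2).eq (represents_s2.mul represents_s0) (by decide)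
lemma tau2_mul_tau2 : tau2 * tau2 = 1 := (represents_tau2.mul represents_tau2).eq .one (by decide)

def jElem : Fin 4 → Wt2 := ![1, s0, s2, s0 * s2]
def jModel : Fin 4 → HalfAff := ![1, S0, S2, S0 * S2]

lemma represents_jElem (k : Fin 4) : Represents (jElem k) (jModel k) := by
  fin_cases k
  exacts [.one, represents_s0, represents_s2, represents_s0.mul represents_s2]

lemma jElem_mem (k : Fin 4) : jElem k ∈ WJ {s0, s2} := by
  have hs0 : s0 ∈ WJ {s0, s2} := Subgroup.subset_closure (Set.mem_insert _ _)
  have hs2 : s2 ∈ WJ {s0, s2} := Subgroup.subset_closure (Set.mem_insert_of_mem _ rfl)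
  fin_cases k
  exacts [one_mem _, hs0, hs2, mul_mem hs0 hs2]

lemma exists_jElem_eq {x : Wt2} (hx : x ∈ WJ {s0, s2}) : ∃ k, jElem k = x := by
  rcases mem_closure_pair_of_involutions s0_mul_s0 s2_mul_s2 s0_mul_s2 hx with rfl | rfl | rfl | rfl
  exacts [⟨0, rfl⟩, ⟨1, rfl⟩, ⟨2, rfl⟩, ⟨3, rfl⟩]

lemma s1_mem_W0 : s1 ∈ W0 := Subgroup.subset_closure (Set.mem_insert _ _)
lemma s2_mem_W0 : s2 ∈ W0 := Subgroup.subset_closure (Set.mem_insert_of_mem _ rfl)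

def signVecs : List (Fin 2 → ℤ) := [![1, 1], ![1, -1], ![-1, 1], ![-1, -1]]

def halfSigns : Set V2 := {v | ∃ z ∈ signVecs, v = halfVec z}

lemma mapsTo_halfSigns {t : Wt2} {g : HalfAff} (ht : Represents t g)
    (hg : ∀ z ∈ signVecs, (g * translation z).trans ∈ signVecs) :
    Set.MapsTo t halfSigns halfSigns := by
  rintro _ ⟨z, hz, rfl⟩
  exact ⟨_, hg z hz, by rw [ht.apply, act_halfVec]⟩

lemma W0_apply_half_mem {x : Wt2} (hx : x ∈ W0) : x (fun _ => 1 / 2) ∈ halfSigns := by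
  refine mapsTo_of_mem_closure_of_involutive ?_ hx ⟨![1, 1], by decide, half_eq_halfVec⟩
  rintro t (rfl | rfl)
  · exact ⟨represents_s1.inv_eq_self (by decide), mapsTo_halfSigns represents_s1 (by decide)⟩
  · exact ⟨represents_s2.inv_eq_self (by decide), mapsTo_halfSigns represents_s2 (by decide)⟩

/-- The words `u` of the thirteen elements `u τ₂` of `Adm(μ)`. -/
def admWords : List (List (Fin 3)) :=
  [[], [0], [1], [2], [0, 1], [0, 2], [1, 0], [1, 2], [2, 1], [0, 1, 0], [0, 2, 1], [1, 0, 2],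
    [2, 1, 2]]

def admModels : List HalfAff := admWords.map fun c => wordModel c * Tau

lemma doubleLength_translation_mul_Tau :
    ∀ z ∈ signVecs, (translation z * Tau).doubleLength = 6 := by
  decide +kernel

lemma subwords_mem_admModels : ∀ z ∈ signVecs, ∀ a b c : Fin 3,
    wordModel [a, b, c] = translation z * Tau →
    ∀ c' ∈ [a, b, c].sublists, wordModel c' * Tau ∈ admModels := by
  decide +kernel

lemma Adm_subset : Adm (fun _ => 1 / 2) ⊆ {w | ∃ g ∈ admModels, Represents w g} := by
  rintro w ⟨x, hx, u, u', om, hom, rfl, hxu, l, l', ⟨hlSt, hprod, hlen⟩, hsub, rfl⟩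
  obtain ⟨z, hz, hxz⟩ := W0_apply_half_mem hx
  have ht : Represents (transl (x fun _ => 1 / 2)) (translation z) := hxz ▸ represents_transl z
  have hodd : ∀ z ∈ signVecs, ¬ Even ((translation z).trans 0) := by decide
  obtain ⟨c, rfl⟩ := exists_word hlSt
  rcases hom with rfl | rfl
  · exact absurd (hprod.trans ((mul_one u').symm.trans hxu.symm))
      (list_prod_ne_of_odd ht (hodd z hz) hlSt)
  have hu' : Represents u' (translation z * Tau) := by
    have : u' = transl (x fun _ => 1 / 2) * tau2 := by rw [hxu, mul_assoc, tau2_mul_tau2, mul_one]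
    exact this ▸ ht.mul represents_tau2
  have hlen3 : c.length = 3 := by
    rw [hu'.ell_eq, doubleLength_translation_mul_Tau z hz, List.length_map] at hlen
    have : (c.length : ℚ) = 3 := by rw [hlen]; norm_num
    exact_mod_cast this
  obtain ⟨a, b, d, rfl⟩ := List.length_eq_three.mp hlen3
  obtain ⟨c', hc', rfl⟩ := List.sublist_map_iff.mp hsub
  exact ⟨_, subwords_mem_admModels z hz a b d ((represents_word _).unique (hprod ▸ hu')) c'
    (List.mem_sublists.mpr hc'), (represents_word c').mul represents_tau2⟩

/-! ## Ekedahl–Oort elements -/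

def eoElem : Fin 5 → Wt2 := ![tau2, s1 * tau2, s1 * s2 * tau2, s1 * s0 * tau2, s1 * s2 * s0 * tau2]
def eoWord : Fin 5 → List (Fin 3) := ![[], [1], [1, 2], [1, 0], [1, 2, 0]]

lemma eoElem_eq (k : Fin 5) : eoElem k = ((eoWord k).map genW).prod * tau2 := by
  fin_cases k <;> simp [eoElem, eoWord, genW, mul_assoc]

lemma represents_eoElem (k : Fin 5) : Represents (eoElem k) (wordModel (eoWord k) * Tau) :=
  eoElem_eq k ▸ (represents_word _).mul represents_tau2

lemma eoElem_injective : Function.Injective eoElem := fun i j hij =>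
  (by decide : Function.Injective fun k => wordModel (eoWord k) * Tau)
    ((represents_eoElem i).unique (hij ▸ represents_eoElem j))

/-- `t^{xμ} τ₂ = s₁s₂s₀ τ₂` for `x = s₁s₂s₁`, so all `eoElem k` lie below it. -/
lemma eoElem_mem_Adm (k : Fin 5) : eoElem k ∈ Adm (fun _ => 1 / 2) := by
  have hx : s1 * s2 * s1 ∈ W0 := mul_mem (mul_mem s1_mem_W0 s2_mem_W0) s1_mem_W0
  have hmax : transl ((s1 * s2 * s1) fun _ => 1 / 2) = ([1, 2, 0].map genW).prod * tau2 := by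
    rw [half_eq_halfVec, ((represents_s1.mul represents_s2).mul represents_s1).apply, act_halfVec]
    exact (represents_transl _).eq ((represents_word _).mul represents_tau2) (by decide)
  have hsub : (eoWord k).Sublist [1, 2, 0] := by
    fin_cases k <;> simp [eoWord]
  exact ⟨_, hx, _, _, tau2, Or.inr rfl, eoElem_eq k, hmax, _, _, isRed_word _ (by decide),
    hsub.map genW, rfl⟩

lemma jModel_mul_admModels_mul_jModel : ∀ kx : Fin 4, ∀ ga ∈ admModels, ∀ ky : Fin 4,
    (∃ k, jModel kx * ga * jModel ky = wordModel (eoWord k) * Tau) ∨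
    ∃ kz, (jModel kz * (jModel kx * ga * jModel ky)).doubleLength <
      (jModel kx * ga * jModel ky).doubleLength := by
  decide +kernel

lemma doubleLength_le_jModel_mul : ∀ k kz, (wordModel (eoWord k) * Tau).doubleLength ≤
    (jModel kz * (wordModel (eoWord k) * Tau)).doubleLength := by
  decide +kernel

lemma eoElem_mem_minJ (k : Fin 5) : eoElem k ∈ minJ {s0, s2} := by
  intro z hz
  obtain ⟨kz, rfl⟩ := exists_jElem_eq hz
  rw [(represents_eoElem k).ell_eq, ((represents_jElem kz).mul (represents_eoElem k)).ell_eq]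
  have := doubleLength_le_jModel_mul k kz
  gcongr

lemma EO_eq : EO {s0, s2} (fun _ => 1 / 2) =
    {tau2, s1 * tau2, s1 * s2 * tau2, s1 * s0 * tau2, s1 * s2 * s0 * tau2} := by
  ext w
  constructor
  · rintro ⟨⟨x, hx, y, hy, a, ha, rfl⟩, hmin⟩
    obtain ⟨kx, rfl⟩ := exists_jElem_eq hx
    obtain ⟨ky, rfl⟩ := exists_jElem_eq hy
    obtain ⟨ga, hga, hRa⟩ := Adm_subset ha
    have hR := ((represents_jElem kx).mul hRa).mul (represents_jElem ky)
    rcases jModel_mul_admModels_mul_jModel kx ga hga ky with ⟨k, hk⟩ | ⟨kz, hlt⟩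
    · rw [hR.eq (represents_eoElem k) hk]
      fin_cases k <;> simp [eoElem]
    · have hle := hmin _ (jElem_mem kz)
      rw [hR.ell_eq, ((represents_jElem kz).mul hR).ell_eq] at hle
      have : ((jModel kz * (jModel kx * ga * jModel ky)).doubleLength : ℚ) <
          (jModel kx * ga * jModel ky).doubleLength := by exact_mod_cast hlt
      linarith
  · have hmem : ∀ k, eoElem k ∈ EO {s0, s2} (fun _ => 1 / 2) := fun k =>
      ⟨⟨1, one_mem _, 1, one_mem _, _, eoElem_mem_Adm k, by simp⟩, eoElem_mem_minJ k⟩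
    rintro (rfl | rfl | rfl | rfl | rfl)
    exacts [hmem 0, hmem 1, hmem 2, hmem 3, hmem 4]

/-! ## σ-supports and σ-Coxeter elements -/

lemma conj_tau2_conj_tau2 (s : Wt2) : MulAut.conj tau2 (MulAut.conj tau2 s) = s := by
  rw [← MulAut.mul_apply, ← map_mul, tau2_mul_tau2, map_one, MulAut.one_apply]

lemma conj_tau2_s0 : MulAut.conj tau2 s0 = s2 := by
  rw [MulAut.conj_apply, represents_tau2.inv_eq_self (by decide)]
  exact ((represents_tau2.mul represents_s0).mul represents_tau2).eq represents_s2 (by decide)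

lemma conj_tau2_s1 : MulAut.conj tau2 s1 = s1 := by
  rw [MulAut.conj_apply, represents_tau2.inv_eq_self (by decide)]
  exact ((represents_tau2.mul represents_s1).mul represents_tau2).eq represents_s1 (by decide)

lemma conj_tau2_s2 : MulAut.conj tau2 s2 = s0 := by
  rw [← conj_tau2_s0, conj_tau2_conj_tau2]

lemma deltaW_zpow {om : Wt2} (hom : om ∈ Om) (m : ℤ) :
    deltaW 1 om ^ m = 1 ∨ deltaW 1 om ^ m = MulAut.conj tau2 := by
  rcases hom with rfl | rfl
  · simp [deltaW]
  · rw [deltaW, mul_one]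
    refine zpow_eq_one_or_self ?_ m
    rw [← map_mul, tau2_mul_tau2, map_one]

lemma suppsig_subset_St (w : Wt2) : suppsig 1 w ⊆ St := by
  rintro s ⟨u, om, l, hom, -, hred, t, ht, m, rfl⟩
  have htSt := hred.1 t ht
  rcases deltaW_zpow hom m with h | h <;> rw [h]
  · exact htSt
  · rcases htSt with rfl | rfl | rfl
    · rw [conj_tau2_s0]; exact Or.inr (Or.inr rfl)
    · rw [conj_tau2_s1]; exact Or.inr (Or.inl rfl)
    · rw [conj_tau2_s2]; exact Or.inl rfl

lemma mem_suppsig_mul_tau2 {u t : Wt2} {l : List Wt2} (hred : IsRed u l) (ht : t ∈ l) (m : ℤ) :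
    (MulAut.conj tau2 ^ m) t ∈ suppsig 1 (u * tau2) :=
  ⟨u, tau2, l, Or.inr rfl, rfl, hred, t, ht, m, by rw [deltaW, mul_one]⟩

lemma exists_of_mem_suppsig_mul_tau2 {u s : Wt2}
    (hu : ∀ l : List Wt2, (∀ s ∈ l, s ∈ St) → l.prod ≠ u * tau2) (hs : s ∈ suppsig 1 (u * tau2)) :
    ∃ l, IsRed u l ∧ ∃ t ∈ l, s = t ∨ s = MulAut.conj tau2 t := by
  obtain ⟨u', om, l, hom, hw, hred, t, ht, m, rfl⟩ := hs
  rcases hom with rfl | rfl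
  · exact absurd (hred.2.1.trans ((mul_one u').symm.trans hw.symm)) (hu l hred.1)
  obtain rfl := mul_right_cancel hw
  refine ⟨l, hred, t, ht, ?_⟩
  rcases deltaW_zpow (Or.inr rfl) m with h | h <;> rw [h]
  exacts [Or.inl rfl, Or.inr rfl]

lemma ell_one : ell 1 = 0 := by
  rw [Represents.one.ell_eq, (by decide : (1 : HalfAff).doubleLength = 0)]
  norm_num

lemma isRed_s1 : IsRed s1 [s1] := by
  simpa [genW] using isRed_word [1] (by decide)

lemma suppsig_tau2 : suppsig 1 tau2 = ∅ := by
  refine Set.eq_empty_iff_forall_notMem.mpr fun s hs => ?_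
  rw [← one_mul tau2] at hs
  obtain ⟨l, hred, t, ht, -⟩ := exists_of_mem_suppsig_mul_tau2
    (fun l hl => one_mul tau2 ▸ list_prod_ne_of_odd represents_tau2 (by decide) hl) hs
  have hl : (l.length : ℚ) = 0 := hred.2.2.trans ell_one
  rw [List.length_eq_zero_iff.mp (by exact_mod_cast hl : l.length = 0)] at ht
  exact List.not_mem_nil ht

lemma suppsig_s1_tau2 : suppsig 1 (s1 * tau2) = {s1} := by
  refine subset_antisymm (fun s hs => ?_) ?_
  · obtain ⟨l, hred, t, ht, hst⟩ := exists_of_mem_suppsig_mul_tau2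
      (fun l hl => list_prod_ne_of_odd (represents_s1.mul represents_tau2) (by decide) hl) hs
    have hl : (l.length : ℚ) = 1 := hred.2.2.trans (isRed_s1.2.2.symm.trans (by norm_num))
    obtain ⟨t', rfl⟩ := List.length_eq_one_iff.mp (by exact_mod_cast hl)
    obtain rfl : t = s1 := (List.mem_singleton.mp ht).trans (by simpa using hred.2.1)
    rcases hst with rfl | rfl
    exacts [rfl, conj_tau2_s1]
  · rintro s rfl
    simpa only [zpow_zero, MulAut.one_apply] using
      mem_suppsig_mul_tau2 isRed_s1 (List.mem_singleton_self s1) 0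

lemma suppsig_mul_tau2_eq_St {u : Wt2} {l : List Wt2} (hred : IsRed u l) (h1 : s1 ∈ l)
    (h02 : s0 ∈ l ∨ s2 ∈ l) : suppsig 1 (u * tau2) = St := by
  have hmem : ∀ t ∈ l, t ∈ suppsig 1 (u * tau2) ∧ MulAut.conj tau2 t ∈ suppsig 1 (u * tau2) :=
    fun t ht => ⟨by simpa only [zpow_zero, MulAut.one_apply] using mem_suppsig_mul_tau2 hred ht 0,
      by simpa only [zpow_one] using mem_suppsig_mul_tau2 hred ht 1⟩
  refine (suppsig_subset_St _).antisymm ?_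
  rintro s (rfl | rfl | rfl)
  · rcases h02 with h | h
    exacts [(hmem _ h).1, conj_tau2_s2 ▸ (hmem _ h).2]
  · exact (hmem _ h1).1
  · rcases h02 with h | h
    exacts [conj_tau2_s0 ▸ (hmem _ h).2, (hmem _ h).1]

lemma suppsig_s1_s2_tau2 : suppsig 1 (s1 * s2 * tau2) = St :=
  suppsig_mul_tau2_eq_St (l := [s1, s2]) (by simpa [genW] using isRed_word [1, 2] (by decide))
    (by simp) (by simp)

lemma suppsig_s1_s0_tau2 : suppsig 1 (s1 * s0 * tau2) = St :=
  suppsig_mul_tau2_eq_St (l := [s1, s0]) (by simpa [genW] using isRed_word [1, 0] (by decide))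
    (by simp) (by simp)

lemma suppsig_s1_s2_s0_tau2 : suppsig 1 (s1 * s2 * s0 * tau2) = St :=
  suppsig_mul_tau2_eq_St (l := [s1, s2, s0])
    (by simpa [genW, mul_assoc] using isRed_word [1, 2, 0] (by decide)) (by simp) (by simp)

lemma orbCount_empty (δ : MulAut Wt2) : orbCount δ ∅ = 0 := by
  simp [orbCount]

lemma orbCount_singleton (δ : MulAut Wt2) (s : Wt2) : orbCount δ {s} = 1 := by
  simp [orbCount]

lemma isCox_tau2 : IsCox 1 tau2 :=
  ⟨1, tau2, Or.inr rfl, (one_mul tau2).symm, by rw [ell_one, suppsig_tau2, orbCount_empty]; rfl⟩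

lemma isCox_s1_tau2 : IsCox 1 (s1 * tau2) :=
  ⟨s1, tau2, Or.inr rfl, rfl, by
    rw [← isRed_s1.2.2, suppsig_s1_tau2, orbCount_singleton]; rfl⟩

lemma EOcox_eq : EOcox 1 {s0, s2} (fun _ => 1 / 2) = {tau2, s1 * tau2} := by
  ext w
  constructor
  · rintro ⟨hEO, hne, -⟩
    rw [EO_eq] at hEO
    rcases hEO with rfl | rfl | rfl | rfl | rfl
    · exact Or.inl rfl
    · exact Or.inr rfl
    · exact absurd suppsig_s1_s2_tau2 hne
    · exact absurd suppsig_s1_s0_tau2 hne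
    · exact absurd suppsig_s1_s2_s0_tau2 hne
  · have hs0 : s0 ∈ St := Or.inl rfl
    rintro (rfl | rfl)
    · refine ⟨by rw [EO_eq]; exact Or.inl rfl, fun h => ?_, isCox_tau2⟩
      rw [suppsig_tau2] at h
      exact (h ▸ hs0 : s0 ∈ (∅ : Set Wt2))
    · refine ⟨by rw [EO_eq]; exact Or.inr (Or.inl rfl), fun h => ?_, isCox_s1_tau2⟩
      rw [suppsig_s1_tau2] at h
      exact (represents_s0.ne represents_s1 (by decide)) (h ▸ hs0 : s0 ∈ ({s1} : Set Wt2))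

lemma EO_diff_EOcox : EO {s0, s2} (fun _ => 1 / 2) \ EOcox 1 {s0, s2} (fun _ => 1 / 2) =
    {s1 * s2 * tau2, s1 * s0 * tau2, s1 * s2 * s0 * tau2} := by
  have hne : ∀ i j : Fin 5, i ≠ j → eoElem i ≠ eoElem j := fun _ _ => eoElem_injective.ne
  have h20 := hne 2 0 (by decide)
  have h21 := hne 2 1 (by decide)
  have h30 := hne 3 0 (by decide)
  have h31 := hne 3 1 (by decide)
  have h40 := hne 4 0 (by decide)
  have h41 := hne 4 1 (by decide)
  simp only [eoElem, Matrix.cons_val] at h20 h21 h30 h31 h40 h41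
  rw [EO_eq, EOcox_eq]
  ext w
  simp only [Set.mem_sdiff, Set.mem_insert_iff, Set.mem_singleton_iff]
  grind

/-! ## Straightness and Newton points -/

lemma sigmaProd_one (w : Wt2) (m : ℕ) : sigmaProd 1 w m = w ^ m := by
  simp [sigmaProd]

lemma isStraight_one_of_represents {w : Wt2} {g : HalfAff} {v : Fin 2 → ℤ} (hw : Represents w g)
    (hsq : g * g = translation v) (hsign : ∀ α ∈ posRoots, 0 ≤ v ⬝ᵥ α * g.rootTerm α)
    (hlen : (translation v).doubleLength = 2 * g.doubleLength) : IsStraight 1 w := by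
  intro m _
  rw [sigmaProd_one, (hw.pow m).ell_eq, hw.ell_eq, doubleLength_pow hsq hsign hlen]
  push_cast
  ring

lemma isNewton_one_of_represents {w x : Wt2} {g gx : HalfAff} {m : ℕ} {u n : Fin 2 → ℤ}
    (hw : Represents w g) (hm : 1 ≤ m) (hpow : g ^ m = translation (m • u)) (hx : x ∈ W0)
    (hgx : Represents x gx) (hn : (gx * translation u).trans = n) (hdom : n 1 ≤ n 0 ∧ 0 ≤ n 1) :
    IsNewton 1 w (halfVec n) := by
  have hu : (fun j => halfVec (m • u) j / (m : ℚ)) = halfVec u := by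
    funext j
    have : (m : ℚ) ≠ 0 := by exact_mod_cast (by omega : m ≠ 0)
    simp only [halfVec, Pi.smul_apply, nsmul_eq_mul, Int.cast_mul, Int.cast_natCast]
    field_simp
  refine ⟨m, halfVec (m • u), hm, one_pow m, ?_, ⟨x, hx, ?_⟩, ?_, ?_⟩
  · rw [sigmaProd_one]
    exact (hw.pow m).eq (represents_transl _) hpow
  · rw [hu, hgx.apply, act_halfVec, hn]
  · simp only [halfVec]
    gcongr
    exact_mod_cast hdom.1
  · simp only [halfVec]
    have : (0 : ℚ) ≤ n 1 := by exact_mod_cast hdom.2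
    positivity

lemma halfVec_one_zero : halfVec ![1, 0] = fun j : Fin 2 => if (j : ℕ) = 0 then 1 / 2 else 0 := by
  funext j
  fin_cases j <;> norm_num [halfVec]

end C2Tilde

open C2Tilde

/-- (C̃₂, ω₂^∨, S̃ ∖ {s₁}, id). -/
theorem statement14 :
    EOcox 1 {s0, s2} (fun _ => 1/2) = {tau2, s1 * tau2} ∧
    EO {s0, s2} (fun _ => 1/2) \ EOcox 1 {s0, s2} (fun _ => 1/2) =
      {s1 * s2 * tau2, s1 * s0 * tau2, s1 * s2 * s0 * tau2} ∧
    (IsStraight 1 (s1 * s2 * tau2) ∧ IsStraight 1 (s1 * s0 * tau2) ∧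
     IsStraight 1 (s1 * s2 * s0 * tau2)) ∧
    (IsNewton 1 (s1 * s2 * tau2) (fun j => if (j : ℕ) = 0 then 1/2 else 0) ∧
     IsNewton 1 (s1 * s0 * tau2) (fun j => if (j : ℕ) = 0 then 1/2 else 0) ∧
     IsNewton 1 (s1 * s2 * s0 * tau2) (fun _ => 1/2)) ∧
    -- s₁s₂τ and s₁s₀τ have supp_σ = S̃, since Ad(τ₂) interchanges s₀ and s₂
    (suppsig 1 (s1 * s2 * tau2) = St ∧ suppsig 1 (s1 * s0 * tau2) = St) := by
  have hx : s1 * s2 * s1 ∈ W0 := mul_mem (mul_mem s1_mem_W0 s2_mem_W0) s1_mem_W0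
  have hRx := (represents_s1.mul represents_s2).mul represents_s1
  refine ⟨EOcox_eq, EO_diff_EOcox, ⟨?_, ?_, ?_⟩, ⟨?_, ?_, ?_⟩,
    suppsig_s1_s2_tau2, suppsig_s1_s0_tau2⟩
  · exact isStraight_one_of_represents (represents_eoElem 2) (v := ![-2, 0])
      (by decide) (by decide) (by decide)
  · exact isStraight_one_of_represents (represents_eoElem 3) (v := ![0, 2])
      (by decide) (by decide) (by decide)
  · exact isStraight_one_of_represents (represents_eoElem 4) (v := ![-2, 2])
      (by decide) (by decide) (by decide)
  · rw [← halfVec_one_zero]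
    exact isNewton_one_of_represents (represents_eoElem 2) (m := 2) (u := ![-1, 0])
      one_le_two (by decide) hx hRx (by decide) (by decide)
  · rw [← halfVec_one_zero]
    exact isNewton_one_of_represents (represents_eoElem 3) (m := 2) (u := ![0, 1])
      one_le_two (by decide) s1_mem_W0 represents_s1 (by decide) (by decide)
  · rw [half_eq_halfVec]
    exact isNewton_one_of_represents (represents_eoElem 4) (m := 1) (u := ![-1, 1])
      le_rfl (by decide) hx hRx (by decide) (by decide)
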